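/- arXiv:2510.09541 — 5 statements merged into one kernel-verified Lean document; each statement's English description precedes it below -/
import Mathlib

section
/- For every real β ≥ 1 and positive functions r_1,…,r_n : Z → ℝ (r_i(z) > 0 for all z), one has log E_q[∏_{i=1}^n r_i] ≤ (1/β)·Σ_{i=1}^n log E_q[r_i^β] + (1/β)·log E_q[q^{−n}], where q^{−n}(z) := q(z)^{−n}. (This is the abstract form of the evidence upper bound of Theorem 1, with r_i the per-token likelihood ratios and (1/β)·log E_q[q^{−n}] the constant C(T).) -/
/-!
Since `q z * r i z ^ β ≤ E_q[r i ^ β]` for each single `z`, every factor obeys the pointwise bound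
`r i z ≤ (E_q[r i ^ β] / q z) ^ (1/β)`, hence
`q z * ∏ i, r i z ≤ (∏ i, E_q[r i ^ β]) ^ (1/β) * q z * (q z ^ (-n)) ^ (1/β)`.
Summing over `z`, Jensen's inequality for the concave map `x ↦ x ^ (1/β)` bounds
`E_q[(q ^ (-n)) ^ (1/β)]` by `E_q[q ^ (-n)] ^ (1/β)`; taking logarithms gives the claim.
-/

open Finset Real

theorem sum_mul_rpow_le_rpow_sum_mul {ι : Type*} (s : Finset ι) {w f : ι → ℝ}
    (hw : ∀ i ∈ s, 0 ≤ w i) (hw_sum : ∑ i ∈ s, w i = 1) (hf : ∀ i ∈ s, 0 ≤ f i)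
    {p : ℝ} (hp₀ : 0 ≤ p) (hp₁ : p ≤ 1) :
    ∑ i ∈ s, w i * f i ^ p ≤ (∑ i ∈ s, w i * f i) ^ p :=
  (concaveOn_rpow hp₀ hp₁).le_map_sum hw hw_sum hf

theorem le_rpow_inv_of_mul_rpow_le {x a c β : ℝ} (hx : 0 ≤ x) (hc : 0 < c) (hβ : 0 < β)
    (h : c * x ^ β ≤ a) : x ≤ (a / c) ^ β⁻¹ := by
  have ha : 0 ≤ a := le_trans (by positivity) h
  rw [le_rpow_inv_iff_of_pos hx (div_nonneg ha hc.le) hβ, le_div_iff₀' hc]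
  exact h

theorem prod_le_rpow_inv_of_mul_rpow_le {ι : Type*} (s : Finset ι) {x a : ι → ℝ} {c β : ℝ}
    (hx : ∀ i ∈ s, 0 ≤ x i) (hc : 0 < c) (hβ : 0 < β) (h : ∀ i ∈ s, c * x i ^ β ≤ a i) :
    ∏ i ∈ s, x i ≤ ((∏ i ∈ s, a i) * c ^ (-(#s : ℝ))) ^ β⁻¹ := by
  have ha : ∀ i ∈ s, 0 ≤ a i / c := fun i hi =>
    div_nonneg (le_trans (by have := hx i hi; positivity) (h i hi)) hc.le
  calc ∏ i ∈ s, x i ≤ ∏ i ∈ s, (a i / c) ^ β⁻¹ :=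
        prod_le_prod hx fun i hi => le_rpow_inv_of_mul_rpow_le (hx i hi) hc hβ (h i hi)
    _ = (∏ i ∈ s, a i / c) ^ β⁻¹ := finsetProd_rpow s _ ha _
    _ = ((∏ i ∈ s, a i) * c ^ (-(#s : ℝ))) ^ β⁻¹ := by
        rw [prod_div_distrib, prod_const, rpow_neg hc.le, rpow_natCast, div_eq_mul_inv]

theorem sum_mul_prod_le_rpow_inv {ι Z : Type*} [Fintype Z] (s : Finset ι) {q : Z → ℝ}
    (hq_pos : ∀ z, 0 < q z) (hq_sum : ∑ z, q z = 1) {r : ι → Z → ℝ} (hr : ∀ i ∈ s, ∀ z, 0 ≤ r i z)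
    {β : ℝ} (hβ : 1 ≤ β) :
    ∑ z, q z * ∏ i ∈ s, r i z ≤
      ((∏ i ∈ s, ∑ z, q z * r i z ^ β) * ∑ z, q z * q z ^ (-(#s : ℝ))) ^ β⁻¹ := by
  have hβ₀ : 0 < β := zero_lt_one.trans_le hβ
  set P := ∏ i ∈ s, ∑ z, q z * r i z ^ β
  have hP : 0 ≤ P := prod_nonneg fun i hi => sum_nonneg fun z _ => by
    have := hq_pos z; have := hr i hi z; positivity
  have hpointwise (z : Z) : ∏ i ∈ s, r i z ≤ (P * q z ^ (-(#s : ℝ))) ^ β⁻¹ :=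
    prod_le_rpow_inv_of_mul_rpow_le s (fun i hi => hr i hi z) (hq_pos z) hβ₀ fun i hi =>
      single_le_sum (f := fun z => q z * r i z ^ β)
        (fun z _ => by have := hq_pos z; have := hr i hi z; positivity) (mem_univ z)
  calc ∑ z, q z * ∏ i ∈ s, r i z ≤ ∑ z, q z * (P * q z ^ (-(#s : ℝ))) ^ β⁻¹ :=
        sum_le_sum fun z _ => mul_le_mul_of_nonneg_left (hpointwise z) (hq_pos z).le
    _ = P ^ β⁻¹ * ∑ z, q z * (q z ^ (-(#s : ℝ))) ^ β⁻¹ := by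
        rw [mul_sum]
        refine sum_congr rfl fun z _ => ?_
        rw [mul_rpow hP (rpow_nonneg (hq_pos z).le _)]
        ring
    _ ≤ P ^ β⁻¹ * (∑ z, q z * q z ^ (-(#s : ℝ))) ^ β⁻¹ := by
        gcongr
        exact sum_mul_rpow_le_rpow_sum_mul univ (fun z _ => (hq_pos z).le) hq_sum
          (fun z _ => rpow_nonneg (hq_pos z).le _) (by positivity) (inv_le_one_of_one_le₀ hβ)
    _ = (P * ∑ z, q z * q z ^ (-(#s : ℝ))) ^ β⁻¹ :=
        (mul_rpow hP (sum_nonneg fun z _ => by have := hq_pos z; positivity)).symm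

theorem abstract_evidence_upper_bound_general {Z : Type*} [Fintype Z] [Nonempty Z]
    (q : Z → ℝ) (hq_pos : ∀ z, 0 < q z)
    (hq_sum : ∑ z, q z = 1)
    {n : ℕ} (r : Fin n → Z → ℝ) (hr : ∀ i z, 0 < r i z)
    {β : ℝ} (hβ : 1 ≤ β) :
    Real.log (∑ z, q z * ∏ i, r i z) ≤
      (1 / β) * ∑ i, Real.log (∑ z, q z * r i z ^ β)
        + (1 / β) * Real.log (∑ z, q z * q z ^ (-(n : ℝ))) := by
  have hmoment (i : Fin n) : 0 < ∑ z, q z * r i z ^ β :=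
    sum_pos (fun z _ => by have := hq_pos z; have := hr i z; positivity) univ_nonempty
  have hconst : 0 < ∑ z, q z * q z ^ (-(n : ℝ)) :=
    sum_pos (fun z _ => by have := hq_pos z; positivity) univ_nonempty
  have hevidence : 0 < ∑ z, q z * ∏ i, r i z :=
    sum_pos (fun z _ => mul_pos (hq_pos z) (prod_pos fun i _ => hr i z)) univ_nonempty
  have hbound := sum_mul_prod_le_rpow_inv univ hq_pos hq_sum (fun i _ z => (hr i z).le) hβ
  rw [card_univ, Fintype.card_fin] at hbound
  calc Real.log (∑ z, q z * ∏ i, r i z)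
      ≤ Real.log (((∏ i, ∑ z, q z * r i z ^ β) * ∑ z, q z * q z ^ (-(n : ℝ))) ^ β⁻¹) :=
        log_le_log hevidence hbound
    _ = _ := by
        rw [log_rpow (mul_pos (prod_pos fun i _ => hmoment i) hconst),
          log_mul (prod_pos fun i _ => hmoment i).ne' hconst.ne',
          log_prod fun i _ => (hmoment i).ne']
        ring

/-- **Abstract evidence upper bound (Theorem 1, abstract form).**
For a strictly positive pmf `q` on a nonempty finite type `Z`, every `β ≥ 1`, and
positive functions `r 1, …, r n`, the log of the expected product is bounded by the
sum of the `β`-Rényi terms plus the constant `(1/β)·log E_q[q⁻ⁿ]`. -/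
theorem abstract_evidence_upper_bound {Z : Type*} [Fintype Z] [Nonempty Z]
    (q : Z → ℝ) (hq_nonneg : ∀ z, 0 ≤ q z) (hq_pos : ∀ z, 0 < q z)
    (hq_sum : ∑ z, q z = 1)
    {n : ℕ} (hn : 1 ≤ n) (r : Fin n → Z → ℝ) (hr : ∀ i z, 0 < r i z)
    {β : ℝ} (hβ : 1 ≤ β) :
    Real.log (∑ z, q z * ∏ i, r i z) ≤
      (1 / β) * ∑ i, Real.log (∑ z, q z * r i z ^ β)
        + (1 / β) * Real.log (∑ z, q z * q z ^ (-(n : ℝ))) :=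
  abstract_evidence_upper_bound_general q hq_pos hq_sum r hr hβ
end

section
/- For every real β with β ≥ n and positive functions r_1,…,r_n : Z → ℝ (r_i(z) > 0 for all z), one has log E_q[∏_{i=1}^n r_i] ≤ (1/β)·Σ_{i=1}^n log E_q[r_i^β]. (This is the constant-free case of Theorem 1, where the constant C(T) vanishes for β ≥ n; it follows by combining the Rényi upper bound with a generalized Hölder inequality.) -/
/-!
Normalize each `r i` so that `E_q[r_i^β] = 1`. Pointwise, weighted AM-GM with weights `1/β` on the
`r_i^β` and the leftover weight `1 - n/β ≥ 0` on the constant `1` gives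
`∏ r_i ≤ (1/β) Σ r_i^β + (1 - n/β)`, whose `q`-expectation is `1`. Undoing the normalization gives
the Hölder-type bound `E_q[∏ r_i] ≤ ∏ E_q[r_i^β]^{1/β}`, and taking logarithms gives the theorem.
-/

open Finset Real

namespace Real

variable {ι : Type*}

theorem geom_mean_le_arith_mean_weighted_add_one_sub (s : Finset ι) (w z : ι → ℝ)
    (hw : ∀ i ∈ s, 0 ≤ w i) (hw' : ∑ i ∈ s, w i ≤ 1) (hz : ∀ i ∈ s, 0 ≤ z i) :
    ∏ i ∈ s, z i ^ w i ≤ ∑ i ∈ s, w i * z i + (1 - ∑ i ∈ s, w i) := by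
  have h := geom_mean_le_arith_mean_weighted s.insertNone
    (fun i => i.elim (1 - ∑ i ∈ s, w i) w) (fun i => i.elim 1 z)
    (by rintro (_ | i) hi <;> simp_all)
    (by simp [sum_insertNone])
    (by rintro (_ | i) hi <;> simp_all)
  simpa [prod_insertNone, sum_insertNone, add_comm] using h

end Real

section Holder

variable {ι Z : Type*} [Fintype ι] [Fintype Z] (q : Z → ℝ)

theorem sum_mul_pos_of_sum_eq_one (hq : ∀ z, 0 ≤ q z) (hq1 : ∑ z, q z = 1) {f : Z → ℝ}
    (hf : ∀ z, 0 < f z) : 0 < ∑ z, q z * f z := by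
  obtain ⟨z, -, hz⟩ := exists_lt_of_sum_lt (s := univ) (f := 0) (g := q) (by simp [hq1])
  exact sum_pos' (fun z _ => mul_nonneg (hq z) (hf z).le) ⟨z, mem_univ z, mul_pos hz (hf z)⟩

theorem sum_mul_prod_le_one_of_sum_mul_rpow_eq_one (hq : ∀ z, 0 ≤ q z) (hq1 : ∑ z, q z = 1)
    (r : ι → Z → ℝ) (hr : ∀ i z, 0 ≤ r i z) {β : ℝ} (hβ0 : 0 < β)
    (hβ : (Fintype.card ι : ℝ) ≤ β) (hr1 : ∀ i, ∑ z, q z * r i z ^ β = 1) :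
    ∑ z, q z * ∏ i, r i z ≤ 1 := by
  have hw : ∑ _i : ι, β⁻¹ ≤ 1 := by
    rw [sum_const, card_univ, nsmul_eq_mul, ← div_eq_mul_inv]
    exact div_le_one_of_le₀ hβ hβ0.le
  have hpoint (z : Z) : ∏ i, r i z ≤ ∑ i, β⁻¹ * r i z ^ β + (1 - ∑ _i : ι, β⁻¹) := by
    simpa only [rpow_rpow_inv (hr _ z) hβ0.ne'] using
      geom_mean_le_arith_mean_weighted_add_one_sub univ (fun _ => β⁻¹) (fun i => r i z ^ β)
        (fun _ _ => inv_nonneg.2 hβ0.le) hw (fun i _ => rpow_nonneg (hr i z) β)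
  calc ∑ z, q z * ∏ i, r i z
      ≤ ∑ z, q z * (∑ i, β⁻¹ * r i z ^ β + (1 - ∑ _i : ι, β⁻¹)) :=
        sum_le_sum fun z _ => mul_le_mul_of_nonneg_left (hpoint z) (hq z)
    _ = ∑ i, β⁻¹ * ∑ z, q z * r i z ^ β + (∑ z, q z) * (1 - ∑ _i : ι, β⁻¹) := by
        simp only [mul_add, sum_add_distrib, mul_sum, ← sum_mul]
        rw [sum_comm]
        simp only [mul_left_comm (q _)]
    _ = 1 := by simp only [hr1, hq1, mul_one, one_mul, add_sub_cancel]

theorem sum_mul_prod_le_prod_rpow_inv (hq : ∀ z, 0 ≤ q z) (hq1 : ∑ z, q z = 1)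
    (r : ι → Z → ℝ) (hr : ∀ i z, 0 < r i z) {β : ℝ} (hβ0 : 0 < β)
    (hβ : (Fintype.card ι : ℝ) ≤ β) :
    ∑ z, q z * ∏ i, r i z ≤ ∏ i, (∑ z, q z * r i z ^ β) ^ β⁻¹ := by
  have hA : ∀ i, 0 < ∑ z, q z * r i z ^ β := fun i =>
    sum_mul_pos_of_sum_eq_one q hq hq1 fun z => rpow_pos_of_pos (hr i z) β
  have hnorm := sum_mul_prod_le_one_of_sum_mul_rpow_eq_one q hq hq1
    (fun i z => r i z / (∑ z, q z * r i z ^ β) ^ β⁻¹)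
    (fun i z => div_nonneg (hr i z).le (rpow_nonneg (hA i).le _)) hβ0 hβ fun i => by
      simp only [div_rpow (hr i _).le (rpow_nonneg (hA i).le _), rpow_inv_rpow (hA i).le hβ0.ne',
        ← mul_div_assoc, ← sum_div]
      exact div_self (hA i).ne'
  simp only [prod_div_distrib, ← mul_div_assoc, ← sum_div] at hnorm
  exact (div_le_one (prod_pos fun i _ => rpow_pos_of_pos (hA i) _)).1 hnorm

end Holder

theorem abstract_evidence_upper_bound_of_n_le_beta_general {Z : Type*} [Fintype Z]
    (q : Z → ℝ) (hq_nonneg : ∀ z, 0 ≤ q z)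
    (hq_sum : ∑ z, q z = 1)
    {n : ℕ} (hn : 1 ≤ n) (r : Fin n → Z → ℝ) (hr : ∀ i z, 0 < r i z)
    {β : ℝ} (hβ : (n : ℝ) ≤ β) :
    Real.log (∑ z, q z * ∏ i, r i z) ≤
      (1 / β) * ∑ i, Real.log (∑ z, q z * r i z ^ β) := by
  have hβ0 : 0 < β := by
    have : (1 : ℝ) ≤ n := by exact_mod_cast hn
    linarith
  have hA : ∀ i, 0 < ∑ z, q z * r i z ^ β := fun i =>
    sum_mul_pos_of_sum_eq_one q hq_nonneg hq_sum fun z => rpow_pos_of_pos (hr i z) β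
  have holder := sum_mul_prod_le_prod_rpow_inv q hq_nonneg hq_sum r hr hβ0
    (by rwa [Fintype.card_fin])
  calc Real.log (∑ z, q z * ∏ i, r i z)
      ≤ Real.log (∏ i, (∑ z, q z * r i z ^ β) ^ β⁻¹) :=
        log_le_log (sum_mul_pos_of_sum_eq_one q hq_nonneg hq_sum fun z =>
          prod_pos fun i _ => hr i z) holder
    _ = (1 / β) * ∑ i, Real.log (∑ z, q z * r i z ^ β) := by
        rw [log_prod fun i _ => (rpow_pos_of_pos (hA i) _).ne', one_div, mul_sum]
        exact sum_congr rfl fun i _ => log_rpow (hA i) _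

/-- **Constant-free evidence upper bound (Theorem 1, case `β ≥ n`).**
For a strictly positive pmf `q` on a nonempty finite type `Z`, every real `β ≥ n`, and
positive functions `r 1, …, r n`, the log of the expected product is bounded by the
sum of the `β`-Rényi terms (the constant `C(T)` vanishes). -/
theorem abstract_evidence_upper_bound_of_n_le_beta {Z : Type*} [Fintype Z] [Nonempty Z]
    (q : Z → ℝ) (hq_nonneg : ∀ z, 0 ≤ q z) (hq_pos : ∀ z, 0 < q z)
    (hq_sum : ∑ z, q z = 1)
    {n : ℕ} (hn : 1 ≤ n) (r : Fin n → Z → ℝ) (hr : ∀ i z, 0 < r i z)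
    {β : ℝ} (hβ : (n : ℝ) ≤ β) :
    Real.log (∑ z, q z * ∏ i, r i z) ≤
      (1 / β) * ∑ i, Real.log (∑ z, q z * r i z ^ β) :=
  abstract_evidence_upper_bound_of_n_le_beta_general q hq_nonneg hq_sum hn r hr hβ
end

section
/- (Rényi variational bound.) Let p : Z → ℝ satisfy p(z) > 0 for every z ∈ Z, and interpret p(z) as the joint mass p(x, z) for a fixed observation x, so that the evidence is p(x) = Σ_z p(z). Then for every real β ≥ 1: Σ_z q(z)·log(p(z)/q(z)) ≤ log(Σ_z p(z)) ≤ (1/β)·log( Σ_z q(z)·(p(z)/q(z))^β ). That is, the evidence lower bound (ELBO) and the β-Rényi evidence upper bound sandwich the log-evidence. -/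
/-! Both bounds are Jensen's inequality for the weights `q` applied to the likelihood ratio
`p / q`, whose `q`-mean is the evidence `∑ z, p z`: concavity of `log` gives the ELBO, and
convexity of `t ↦ t ^ β` for `β ≥ 1` gives `(∑ z, p z) ^ β ≤ ∑ z, q z * (p z / q z) ^ β`,
whose logarithm is the Rényi bound. -/

open Finset Real

section

variable {ι : Type*} {s : Finset ι} {w p : ι → ℝ}

lemma sum_mul_div_eq_sum (hw : ∀ i ∈ s, 0 < w i) : ∑ i ∈ s, w i * (p i / w i) = ∑ i ∈ s, p i :=
  sum_congr rfl fun i hi => mul_div_cancel₀ (p i) (hw i hi).ne'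

lemma sum_mul_log_div_le_log_sum (hw : ∀ i ∈ s, 0 < w i) (hw1 : ∑ i ∈ s, w i = 1)
    (hp : ∀ i ∈ s, 0 < p i) :
    ∑ i ∈ s, w i * log (p i / w i) ≤ log (∑ i ∈ s, p i) := by
  have jensen := strictConcaveOn_log_Ioi.concaveOn.le_map_sum (fun i hi => (hw i hi).le) hw1
    (fun i hi => div_pos (hp i hi) (hw i hi) : ∀ i ∈ s, p i / w i ∈ Set.Ioi 0)
  simpa only [smul_eq_mul, sum_mul_div_eq_sum hw] using jensen

lemma sum_rpow_le_sum_mul_div_rpow {β : ℝ} (hβ : 1 ≤ β) (hw : ∀ i ∈ s, 0 < w i)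
    (hw1 : ∑ i ∈ s, w i = 1) (hp : ∀ i ∈ s, 0 ≤ p i) :
    (∑ i ∈ s, p i) ^ β ≤ ∑ i ∈ s, w i * (p i / w i) ^ β := by
  have jensen := (convexOn_rpow hβ).map_sum_le (fun i hi => (hw i hi).le) hw1
    (fun i hi => div_nonneg (hp i hi) (hw i hi).le : ∀ i ∈ s, p i / w i ∈ Set.Ici 0)
  simpa only [smul_eq_mul, sum_mul_div_eq_sum hw] using jensen

lemma log_sum_le_inv_mul_log_sum_mul_div_rpow {β : ℝ} (hβ : 1 ≤ β) (hw : ∀ i ∈ s, 0 < w i)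
    (hw1 : ∑ i ∈ s, w i = 1) (hp : ∀ i ∈ s, 0 < p i) :
    log (∑ i ∈ s, p i) ≤ 1 / β * log (∑ i ∈ s, w i * (p i / w i) ^ β) := by
  have hs : s.Nonempty := nonempty_of_sum_ne_zero (hw1 ▸ one_ne_zero)
  have hsum_pos : 0 < ∑ i ∈ s, p i := sum_pos hp hs
  have hlog := log_le_log (rpow_pos_of_pos hsum_pos β)
    (sum_rpow_le_sum_mul_div_rpow hβ hw hw1 fun i hi => (hp i hi).le)
  rw [log_rpow hsum_pos] at hlog
  rw [div_mul_eq_mul_div, le_div_iff₀ (by linarith)]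
  linarith

end

theorem renyi_variational_bound_general {Z : Type*} [Fintype Z]
    (q : Z → ℝ) (hq_pos : ∀ z, 0 < q z)
    (hq_sum : ∑ z, q z = 1)
    (p : Z → ℝ) (hp : ∀ z, 0 < p z)
    {β : ℝ} (hβ : 1 ≤ β) :
    (∑ z, q z * Real.log (p z / q z)) ≤ Real.log (∑ z, p z) ∧
      Real.log (∑ z, p z) ≤ (1 / β) * Real.log (∑ z, q z * (p z / q z) ^ β) :=
  ⟨sum_mul_log_div_le_log_sum (fun z _ => hq_pos z) hq_sum fun z _ => hp z,
    log_sum_le_inv_mul_log_sum_mul_div_rpow hβ (fun z _ => hq_pos z) hq_sum fun z _ => hp z⟩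

/-- **Rényi variational bound (Lemma 1).**
For a strictly positive pmf `q` and a positive joint mass `p` on a nonempty finite
type `Z`, the ELBO and the `β`-Rényi evidence upper bound sandwich the log-evidence
`log (∑ z, p z)` for every `β ≥ 1`. -/
theorem renyi_variational_bound {Z : Type*} [Fintype Z] [Nonempty Z]
    (q : Z → ℝ) (hq_nonneg : ∀ z, 0 ≤ q z) (hq_pos : ∀ z, 0 < q z)
    (hq_sum : ∑ z, q z = 1)
    (p : Z → ℝ) (hp : ∀ z, 0 < p z)
    {β : ℝ} (hβ : 1 ≤ β) :
    (∑ z, q z * Real.log (p z / q z)) ≤ Real.log (∑ z, p z) ∧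
      Real.log (∑ z, p z) ≤ (1 / β) * Real.log (∑ z, q z * (p z / q z) ^ β) :=
  renyi_variational_bound_general q hq_pos hq_sum p hp hβ
end

section
/- (Transition-time identity.) Under the discrete-time masked-diffusion setup, for every position i ∈ Fin n and every function F : (Fin n → Option V) → ℝ, E_Q[ F(z_{τ_i+1}(τ)) ] = Σ_{t=1}^{T−1} E_Q[ 1{z_{t+1}(τ)_i = none} · ((α(t) − α(t+1))/(1 − α(t+1))) · F(z_{t+1}(τ)) ]. In words: the expectation of any statistic of the context seen at token i's own unmasking step can be rewritten as a weighted sum over timesteps of expectations restricted to the event that token i is masked, with posterior weight (α(t) − α(t+1))/(1 − α(t+1)). -/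
open scoped Classical

/-- The partially masked sequence `z_s(τ)`: at time `s`, position `i` still shows the
clean token `x i` if `s ≤ τ i`, and is masked (`none`) otherwise. -/
def maskedSeq {V : Type*} {n : ℕ} (x : Fin n → V) (τ : Fin n → ℕ) (s : ℕ) :
    Fin n → Option V :=
  fun i => if s ≤ τ i then some (x i) else none

/-- The forward-process probability of the masking-time vector `τ`:
`q_fwd(τ) = ∏ i, (α (τ i) − α (τ i + 1))`. -/
noncomputable def fwdProb {n : ℕ} (α : ℕ → ℝ) (τ : Fin n → ℕ) : ℝ :=
  ∏ i, (α (τ i) - α (τ i + 1))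

/-- Expectation of `F` over masking-time vectors `τ ∈ {1, …, T−1}ⁿ` under the product
measure `Q` with `P(τ i = t) = α t − α (t+1)`. -/
noncomputable def expQ {n : ℕ} (α : ℕ → ℝ) (T : ℕ) (F : (Fin n → ℕ) → ℝ) : ℝ :=
  ∑ τ ∈ Fintype.piFinset (fun _ : Fin n => Finset.Icc 1 (T - 1)), fwdProb α τ * F τ

/-! Condition on `τ i`. On the fiber `τ i = t` the left side sees `z_{t+1}`. On the right,
`z_{t+1}` does not see where `τ i` lies in `{1, …, t}`, and under the product measure moving
`τ i` from `s` to `t` rescales the weight by `(α t − α (t+1)) / (α s − α (s+1))`. Summed over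
`s ≤ t`, the masses `α s − α (s+1)` telescope to `1 − α (t+1)`, which the posterior weight
cancels. -/

open Finset Function

lemma fwdProb_update_mul {n : ℕ} (α : ℕ → ℝ) (τ : Fin n → ℕ) (i : Fin n) (a : ℕ) :
    fwdProb α (update τ i a) * (α (τ i) - α (τ i + 1)) = fwdProb α τ * (α a - α (a + 1)) := by
  unfold fwdProb
  rw [Fintype.prod_eq_mul_prod_compl i, Fintype.prod_eq_mul_prod_compl i (fun j => _ - _),
    update_self, prod_congr rfl fun j hj => by rw [update_of_ne (by simpa using hj)]]
  ring

lemma maskedSeq_eq_none_iff {V : Type*} {n : ℕ} (x : Fin n → V) (τ : Fin n → ℕ) (s : ℕ)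
    (i : Fin n) : maskedSeq x τ s i = none ↔ τ i < s := by
  simp [maskedSeq]

lemma maskedSeq_update_of_lt {V : Type*} {n : ℕ} (x : Fin n → V) {τ : Fin n → ℕ} {i : Fin n}
    {a s : ℕ} (ha : a < s) (hτ : τ i < s) :
    maskedSeq x (update τ i a) s = maskedSeq x τ s := by
  funext j
  rcases eq_or_ne j i with rfl | hj
  · simp [maskedSeq, ha.not_ge, hτ.not_ge]
  · simp [maskedSeq, update_of_ne hj]

lemma update_mem_filter_piFinset {n : ℕ} {S : Fin n → Finset ℕ} {τ : Fin n → ℕ}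
    (hτ : τ ∈ Fintype.piFinset S) {i : Fin n} {a : ℕ} (ha : a ∈ S i) :
    update τ i a ∈ ({σ ∈ Fintype.piFinset S | σ i = a} : Finset _) := by
  refine mem_filter.2 ⟨Fintype.mem_piFinset.2 fun j => ?_, update_self ..⟩
  rcases eq_or_ne j i with rfl | hj
  · simpa using ha
  · simpa [update_of_ne hj] using Fintype.mem_piFinset.1 hτ j

lemma sum_fwdProb_filter_eq_mul {n : ℕ} (α : ℕ → ℝ) (S : Fin n → Finset ℕ) {i : Fin n}
    {s t : ℕ} (hs : s ∈ S i) (ht : t ∈ S i) (G : (Fin n → ℕ) → ℝ) :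
    (∑ τ ∈ Fintype.piFinset S with τ i = s, fwdProb α τ * G τ) * (α t - α (t + 1)) =
      (∑ τ ∈ Fintype.piFinset S with τ i = t, fwdProb α τ * G (update τ i s)) *
        (α s - α (s + 1)) := by
  have update_update {τ : Fin n → ℕ} {a b : ℕ} (h : τ i = a) : update (update τ i b) i a = τ := by
    rw [update_idem, ← h, update_eq_self]
  rw [sum_mul, sum_mul]
  refine sum_nbij' (update · i t) (update · i s)
    (fun τ hτ => update_mem_filter_piFinset (mem_filter.1 hτ).1 ht)
    (fun τ hτ => update_mem_filter_piFinset (mem_filter.1 hτ).1 hs)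
    (fun τ hτ => update_update (mem_filter.1 hτ).2) (fun τ hτ => update_update (mem_filter.1 hτ).2)
    fun τ hτ => ?_
  have hτs := (mem_filter.1 hτ).2
  have h := fwdProb_update_mul α τ i t
  rw [hτs] at h
  rw [update_update hτs]
  linear_combination (-G τ) * h

lemma sum_fwdProb_filter_le_mul {n : ℕ} (α : ℕ → ℝ) {N t : ℕ} (ht : t ∈ Icc 1 N) (i : Fin n)
    (G : (Fin n → ℕ) → ℝ) (hG : ∀ τ s, τ i = t → s ≤ t → G (update τ i s) = G τ) :
    (∑ τ ∈ Fintype.piFinset (fun _ => Icc 1 N) with τ i ≤ t, fwdProb α τ * G τ) *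
        (α t - α (t + 1)) =
      (α 1 - α (t + 1)) *
        ∑ τ ∈ Fintype.piFinset (fun _ => Icc 1 N) with τ i = t, fwdProb α τ * G τ := by
  obtain ⟨ht1, htN⟩ := mem_Icc.1 ht
  have hmaps : ∀ τ ∈ ({τ ∈ Fintype.piFinset (fun _ => Icc 1 N) | τ i ≤ t} : Finset _),
      τ i ∈ Icc 1 t := by
    intro τ hτ
    obtain ⟨hτ, hle⟩ := mem_filter.1 hτ
    exact mem_Icc.2 ⟨(mem_Icc.1 (Fintype.mem_piFinset.1 hτ i)).1, hle⟩
  have htelescope : ∑ s ∈ Icc 1 t, (α s - α (s + 1)) = α 1 - α (t + 1) := by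
    simpa only [neg_sub_neg] using sum_Icc_sub ht1 (fun s => -α s)
  rw [← sum_fiberwise_of_maps_to hmaps, sum_mul, ← htelescope, sum_mul]
  refine sum_congr rfl fun s hs => ?_
  obtain ⟨hs1, hst⟩ := mem_Icc.1 hs
  rw [filter_filter, filter_congr fun τ _ => and_iff_right_of_imp fun h : τ i = s => h ▸ hst,
    sum_fwdProb_filter_eq_mul α _ (mem_Icc.2 ⟨hs1, hst.trans htN⟩) ht,
    sum_congr rfl fun τ hτ => by rw [hG τ s (mem_filter.1 hτ).2 hst], mul_comm]

lemma expQ_eq_sum_fiberwise {n : ℕ} (α : ℕ → ℝ) (T : ℕ) (i : Fin n)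
    (H : ℕ → (Fin n → ℕ) → ℝ) :
    expQ α T (fun τ => H (τ i) τ) =
      ∑ t ∈ Icc 1 (T - 1), ∑ τ ∈ Fintype.piFinset (fun _ => Icc 1 (T - 1)) with τ i = t,
        fwdProb α τ * H t τ := by
  unfold expQ
  rw [← sum_fiberwise_of_maps_to (g := (· i)) fun τ hτ => Fintype.mem_piFinset.1 hτ i]
  exact sum_congr rfl fun t _ => sum_congr rfl fun τ hτ => by simp only [(mem_filter.1 hτ).2]

lemma expQ_indicator_mul {n : ℕ} (α : ℕ → ℝ) (T : ℕ) (P : (Fin n → ℕ) → Prop)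
    [DecidablePred P] (c : ℝ) (G : (Fin n → ℕ) → ℝ) :
    expQ α T (fun τ => (if P τ then (1 : ℝ) else 0) * c * G τ) =
      c * ∑ τ ∈ Fintype.piFinset (fun _ => Icc 1 (T - 1)) with P τ, fwdProb α τ * G τ := by
  unfold expQ
  rw [mul_sum, sum_filter]
  exact sum_congr rfl fun τ _ => by
    simp only [ite_mul, one_mul, zero_mul, mul_ite, mul_zero, mul_left_comm]

theorem masked_diffusion_transition_time_identity_general
    {V : Type*} {n : ℕ} (x : Fin n → V)
    {T : ℕ} (α : ℕ → ℝ)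
    (hα : StrictAntiOn α (Set.Icc 1 T)) (hα1 : α 1 = 1)
    (i : Fin n) (F : (Fin n → Option V) → ℝ) :
    expQ α T (fun τ => F (maskedSeq x τ (τ i + 1))) =
      ∑ t ∈ Finset.Icc 1 (T - 1),
        expQ α T (fun τ =>
          (if maskedSeq x τ (t + 1) i = none then (1 : ℝ) else 0) *
            ((α t - α (t + 1)) / (1 - α (t + 1))) * F (maskedSeq x τ (t + 1))) := by
  refine (expQ_eq_sum_fiberwise α T i fun t τ => F (maskedSeq x τ (t + 1))).trans
    (sum_congr rfl fun t ht => ?_)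
  obtain ⟨ht1, htT⟩ := mem_Icc.1 ht
  have hα_lt_one : α (t + 1) < 1 :=
    hα1 ▸ hα ⟨le_rfl, by omega⟩ ⟨by omega, by omega⟩ (by omega)
  have hswitch := sum_fwdProb_filter_le_mul α ht i (fun τ => F (maskedSeq x τ (t + 1)))
    fun τ s hτ hs => congrArg F (maskedSeq_update_of_lt x (by omega) (by omega))
  simp only [maskedSeq_eq_none_iff, Nat.lt_add_one_iff, expQ_indicator_mul]
  rw [hα1] at hswitch
  rw [div_mul_eq_mul_div, eq_div_iff (sub_ne_zero.2 hα_lt_one.ne')]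
  linarith

/-- **Transition-time identity.** The expectation of any statistic of the context seen
at token `i`'s own unmasking step equals a weighted sum over timesteps of expectations
restricted to the event that token `i` is masked, with posterior weight
`(α t − α (t+1)) / (1 − α (t+1))`. -/
theorem masked_diffusion_transition_time_identity
    {V : Type*} [Fintype V] [Nonempty V] {n : ℕ} (hn : 1 ≤ n) (x : Fin n → V)
    {T : ℕ} (hT : 2 ≤ T) (α : ℕ → ℝ)
    (hα : StrictAntiOn α (Set.Icc 1 T)) (hα1 : α 1 = 1) (hαT : α T = 0)
    (i : Fin n) (F : (Fin n → Option V) → ℝ) :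
    expQ α T (fun τ => F (maskedSeq x τ (τ i + 1))) =
      ∑ t ∈ Finset.Icc 1 (T - 1),
        expQ α T (fun τ =>
          (if maskedSeq x τ (t + 1) i = none then (1 : ℝ) else 0) *
            ((α t - α (t + 1)) / (1 - α (t + 1))) * F (maskedSeq x τ (t + 1))) :=
  masked_diffusion_transition_time_identity_general x α hα hα1 i F
end

section
/- (Optimal mixture strictly reduces variance.) If Var[D] > 0, Cov(U, D) ≠ 0, and Cov(U, D) ≠ −Var[D], then with ω⋆ := −Cov(U, D)/Var[D] one has Var[g_{ω⋆}] < min( Var[g_0], Var[g_1] ); that is, the gradient at the optimal mixture coefficient has strictly smaller variance than both the pure lower-bound gradient (ω = 0) and the pure upper-bound gradient (ω = 1). -/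
open MeasureTheory ProbabilityTheory

/-- Covariance of two real random variables with respect to a measure `μ`:
`Cov(X, Y) = E[(X − E[X])·(Y − E[Y])]`. -/
noncomputable def cov {Ω : Type*} {mΩ : MeasurableSpace Ω} (μ : Measure Ω)
    (X Y : Ω → ℝ) : ℝ :=
  ∫ ω, (X ω - ∫ a, X a ∂μ) * (Y ω - ∫ a, Y a ∂μ) ∂μ

/-! `c ↦ Var[X + c • Y]` is the quadratic `Var[X] + 2 c Cov(X, Y) + c² Var[Y]`; completing the
square shows that it exceeds its value at `c⋆ = -Cov(X, Y) / Var[Y]` by `Var[Y] (c - c⋆)²`,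
which is positive for `c ≠ c⋆`. The hypotheses `Cov(U, D) ≠ 0` and `Cov(U, D) ≠ -Var[D]` say
exactly that `c⋆ ≠ 0` and `c⋆ ≠ 1`. -/

section

variable {Ω : Type*} {mΩ : MeasurableSpace Ω} {μ : Measure Ω} {X Y : Ω → ℝ}

lemma cov_eq_covariance (μ : Measure Ω) (X Y : Ω → ℝ) : cov μ X Y = cov[X, Y; μ] := rfl

variable [IsFiniteMeasure μ]

lemma variance_add_const_mul (hX : MemLp X 2 μ) (hY : MemLp Y 2 μ) (c : ℝ) :
    Var[fun ω ↦ X ω + c * Y ω; μ] = Var[X; μ] + 2 * c * cov[X, Y; μ] + c ^ 2 * Var[Y; μ] := by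
  rw [variance_fun_add hX (hY.const_mul c), covariance_const_mul_right, variance_const_mul]
  ring

lemma variance_add_const_mul_eq_add_sq (hX : MemLp X 2 μ) (hY : MemLp Y 2 μ)
    (hY₀ : Var[Y; μ] ≠ 0) (c : ℝ) :
    Var[fun ω ↦ X ω + c * Y ω; μ] =
      Var[fun ω ↦ X ω + -cov[X, Y; μ] / Var[Y; μ] * Y ω; μ] +
        Var[Y; μ] * (c - -cov[X, Y; μ] / Var[Y; μ]) ^ 2 := by
  rw [variance_add_const_mul hX hY, variance_add_const_mul hX hY]
  field_simp
  ring

lemma variance_add_optimal_mul_lt (hX : MemLp X 2 μ) (hY : MemLp Y 2 μ)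
    (hY₀ : 0 < Var[Y; μ]) {c : ℝ} (hc : c ≠ -cov[X, Y; μ] / Var[Y; μ]) :
    Var[fun ω ↦ X ω + -cov[X, Y; μ] / Var[Y; μ] * Y ω; μ] < Var[fun ω ↦ X ω + c * Y ω; μ] := by
  rw [variance_add_const_mul_eq_add_sq hX hY hY₀.ne' c]
  exact lt_add_of_pos_right _ (mul_pos hY₀ (sq_pos_of_ne_zero (sub_ne_zero.2 hc)))

end

/-- **Optimal mixture strictly reduces variance.**
With `U := W·S`, `V := ρ·S` square-integrable, `D := V − U` and `g_ω := U + ω·D`, if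
`Var[D] > 0`, `Cov(U, D) ≠ 0` and `Cov(U, D) ≠ −Var[D]`, then the gradient at the
optimal mixture coefficient `ω⋆ := −Cov(U, D)/Var[D]` has strictly smaller variance
than both the pure lower-bound gradient (`ω = 0`) and the pure upper-bound gradient
(`ω = 1`). -/
theorem variance_mixture_gradient_strict_reduction
    {Ω : Type*} {mΩ : MeasurableSpace Ω} (μ : Measure Ω) [IsProbabilityMeasure μ]
    (W ρ S : Ω → ℝ)
    (hU : MemLp (fun a => W a * S a) 2 μ)
    (hV : MemLp (fun a => ρ a * S a) 2 μ)
    (U D : Ω → ℝ) (hUdef : U = fun a => W a * S a)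
    (hDdef : D = fun a => ρ a * S a - W a * S a)
    (hD : 0 < variance D μ)
    (hcov : cov μ U D ≠ 0) (hcov' : cov μ U D ≠ -variance D μ) :
    ∀ ωstar : ℝ, ωstar = -cov μ U D / variance D μ →
      variance (fun a => U a + ωstar * D a) μ <
        min (variance (fun a => U a + 0 * D a) μ)
          (variance (fun a => U a + 1 * D a) μ) := by
  rintro _ rfl
  have hU₂ : MemLp U 2 μ := hUdef ▸ hU
  have hD₂ : MemLp D 2 μ := hDdef ▸ hV.sub hU
  rw [cov_eq_covariance] at hcov hcov' ⊢
  refine lt_min (variance_add_optimal_mul_lt hU₂ hD₂ hD ?_)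
    (variance_add_optimal_mul_lt hU₂ hD₂ hD ?_)
  · exact (div_ne_zero (neg_ne_zero.2 hcov) hD.ne').symm
  · rw [Ne, eq_div_iff hD.ne']
    exact fun h ↦ hcov' (by linarith)
end
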